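/- arXiv:2505.24100 — 4 statements merged into one kernel-verified Lean document; each statement's English description precedes it below -/
import Mathlib

section
/- Let t ≥ 5 be an integer and let λ, m be such that λ − t(t−3)^m is even and (2t−6)(3t−10) ≤ λ − t(t−3)^m < t(t−3)^{m+1}. Then there exist nonnegative integers s₁, s₂ with (2t−6)s₁ + (3t−10)s₂ = λ − t(t−3)^m and 2(s₁+s₂) < t(t−3)^m. -/
/-!
Write `λ - t(t-3)^m = 2k`. Since `3(t-3) - (3t-10) = 1`, the integers `t-3` and `3t-10` are
coprime, and `k ≥ (t-3)(3t-10)` is beyond their Frobenius number, so `k = (t-3)s + (3t-10)u`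
with `0 ≤ s < 3t-10` and `u ≥ 0`; take `s₁ = s`, `s₂ = 2u`. Multiplying the weight bound by
`3t-10`, it becomes `4k + 2(t-4)s < (3t-10) t(t-3)^m`, which follows from the upper bound on `2k`
and from `2(3t-10) < t(t-3)^m`, itself a consequence of the two bounds on `2k`.
-/

theorem exists_nat_mul_add_mul_eq_of_isCoprime {a b k : ℤ} (hab : IsCoprime a b) (ha : 0 ≤ a)
    (hb : 0 < b) (hk : a * (b - 1) ≤ k) :
    ∃ s u : ℕ, (s : ℤ) < b ∧ a * s + b * u = k := by
  obtain ⟨x, y, hxy⟩ := hab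
  obtain ⟨s, hs0, hsb, hmod⟩ : ∃ s, 0 ≤ s ∧ s < b ∧ a * s ≡ k [ZMOD b] :=
    ⟨k * x % b, Int.emod_nonneg _ hb.ne', Int.emod_lt_of_pos _ hb,
      calc a * (k * x % b) ≡ a * (k * x) [ZMOD b] := (Int.mod_modEq _ _).mul_left _
        _ = k - k * y * b := by linear_combination k * hxy
        _ ≡ k [ZMOD b] := by simp [Int.ModEq]⟩
  obtain ⟨u, hu⟩ := hmod.dvd
  have hu0 : 0 ≤ u := by
    refine nonneg_of_mul_nonneg_right ?_ hb
    linarith [mul_le_mul_of_nonneg_left (Int.le_sub_one_of_lt hsb) ha]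
  lift s to ℕ using hs0
  lift u to ℕ using hu0
  exact ⟨s, u, hsb, by linear_combination -hu⟩

theorem two_mul_add_two_mul_lt {t k M s u : ℤ} (ht : 4 ≤ t) (hs : s < 3 * t - 10)
    (hrep : (t - 3) * s + (3 * t - 10) * u = k) (hk : 2 * k < M * (t - 3))
    (hM : 2 * (3 * t - 10) < M) :
    2 * (s + 2 * u) < M := by
  have hweight : (3 * t - 10) * (2 * (s + 2 * u)) = 4 * k + 2 * (t - 4) * s := by
    linear_combination 4 * hrep
  have hs_le : (t - 4) * (2 * s) ≤ (t - 4) * M :=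
    mul_le_mul_of_nonneg_left (by linarith) (by linarith)
  refine lt_of_mul_lt_mul_left (a := 3 * t - 10) ?_ (by linarith)
  linarith

theorem stmt_1_general (t : ℤ) (ht : 5 ≤ t) (m : ℕ) (lam : ℤ)
    (heven : Even (lam - t * (t - 3) ^ m))
    (hlow : (2 * t - 6) * (3 * t - 10) ≤ lam - t * (t - 3) ^ m)
    (hhigh : lam - t * (t - 3) ^ m < t * (t - 3) ^ (m + 1)) :
    ∃ s₁ s₂ : ℕ, (2 * t - 6) * s₁ + (3 * t - 10) * s₂ = lam - t * (t - 3) ^ m ∧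
      2 * ((s₁ : ℤ) + s₂) < t * (t - 3) ^ m := by
  obtain ⟨k, hk⟩ := heven
  have hhigh' : 2 * k < t * (t - 3) ^ m * (t - 3) := by rw [mul_assoc, ← pow_succ]; linarith
  have hM : 2 * (3 * t - 10) < t * (t - 3) ^ m := by
    refine lt_of_mul_lt_mul_left (a := t - 3) ?_ (by linarith)
    linarith
  have hcop : IsCoprime (t - 3) (3 * t - 10) := ⟨3, -1, by ring⟩
  obtain ⟨s, u, hs, hrep⟩ :=
    exists_nat_mul_add_mul_eq_of_isCoprime hcop (by linarith) (by linarith) (by nlinarith)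
  refine ⟨s, 2 * u, by push_cast; linear_combination 2 * hrep - hk, ?_⟩
  push_cast
  exact two_mul_add_two_mul_lt (by linarith) hs hrep hhigh' hM

theorem stmt_1 (t : ℤ) (ht : 5 ≤ t) (m : ℕ) (hm : 2 ≤ m) (lam : ℤ)
    (heven : Even (lam - t * (t - 3) ^ m))
    (hlow : (2 * t - 6) * (3 * t - 10) ≤ lam - t * (t - 3) ^ m)
    (hhigh : lam - t * (t - 3) ^ m < t * (t - 3) ^ (m + 1)) :
    ∃ s₁ s₂ : ℕ, (2 * t - 6) * s₁ + (3 * t - 10) * s₂ = lam - t * (t - 3) ^ m ∧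
      2 * ((s₁ : ℤ) + s₂) < t * (t - 3) ^ m :=
  stmt_1_general t ht m lam heven hlow hhigh
end

section
/- Let T be a tree and let L, L′ be two paths in T whose union is T and which share at least one vertex. Let Q be the (unique) path in T between the first and last vertex of L that lie on L′ (traversing L). Then Q is a common subpath of both L and L′, and V(L)∖V(Q) and V(L′)∖V(Q) are anticomplete in T. -/
namespace SimpleGraph

variable {V : Type*} {G : SimpleGraph V}

namespace Walk

lemma exists_isSubwalk_or_reverse_isSubwalk [DecidableEq V] {a b x y : V} (p : G.Walk a b)
    (hx : x ∈ p.support) (hy : y ∈ p.support) :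
    ∃ q : G.Walk x y, q.IsSubwalk p ∨ q.reverse.IsSubwalk p := by
  rcases (mem_support_append_iff _ _).mp ((p.take_spec hx).symm ▸ hy) with h | h
  · refine ⟨((p.takeUntil x hx).dropUntil y h).reverse, Or.inr ?_⟩
    rw [reverse_reverse]
    exact (isSubwalk_dropUntil _ h).trans (isSubwalk_takeUntil _ hx)
  · exact ⟨(p.dropUntil x hx).takeUntil y h,
      Or.inl ((isSubwalk_takeUntil _ h).trans (isSubwalk_dropUntil _ hx))⟩

lemma getVert_mem_support_take_drop {u v : V} (p : G.Walk u v) {i j k : ℕ}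
    (hik : i ≤ k) (hkj : k ≤ j) : p.getVert k ∈ ((p.drop i).take (j - i)).support := by
  have hk : ((p.drop i).take (j - i)).getVert (k - i) = p.getVert k := by
    rw [take_getVert, drop_getVert, min_eq_right (by omega), Nat.add_sub_cancel' hik]
  exact hk ▸ getVert_mem_support _ _

end Walk

open Walk

lemma IsAcyclic.support_subset_and_edges_subset_of_isPath (hG : G.IsAcyclic) {a b x y : V}
    {p : G.Walk a b} {q : G.Walk x y} (hp : p.IsPath) (hq : q.IsPath)
    (hx : x ∈ p.support) (hy : y ∈ p.support) :
    q.support ⊆ p.support ∧ q.edges ⊆ p.edges := by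
  classical
  have unique (r : G.Walk x y) (hr : r.IsPath) : r = q :=
    Subtype.mk.inj <| hG.subsingleton_path x y |>.elim ⟨r, hr⟩ ⟨q, hq⟩
  obtain ⟨r, hr | hr⟩ := p.exists_isSubwalk_or_reverse_isSubwalk hx hy
  · rw [← unique r (isPath_of_isSubwalk hr hp)]
    exact ⟨hr.support_subset, hr.edges_subset⟩
  · rw [← unique r (isPath_reverse_iff _ |>.mp (isPath_of_isSubwalk hr hp))]
    refine ⟨fun w hw => hr.support_subset ?_, fun e he => hr.edges_subset ?_⟩
    · rwa [support_reverse, List.mem_reverse]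
    · rwa [edges_reverse, List.mem_reverse]

/-- Take the stretch of `p` between its first and last vertex on `q`; by uniqueness of paths
it is also a stretch of `q`, and by extremality it contains every common vertex. -/
theorem IsAcyclic.exists_isPath_support_eq_inter (hG : G.IsAcyclic) {a b a' b' : V}
    {p : G.Walk a b} {q : G.Walk a' b'} (hp : p.IsPath) (hq : q.IsPath)
    (hmeet : ∃ v, v ∈ p.support ∧ v ∈ q.support) :
    ∃ (u v : V) (Q : G.Walk u v), Q.IsPath ∧
      (∀ w, w ∈ Q.support ↔ w ∈ p.support ∧ w ∈ q.support) ∧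
      Q.edges ⊆ p.edges ∧ Q.edges ⊆ q.edges := by
  classical
  set I := (Finset.range (p.length + 1)).filter (fun k => p.getVert k ∈ q.support)
  have index_of_common (w : V) (hwp : w ∈ p.support) (hwq : w ∈ q.support) :
      ∃ k ∈ I, p.getVert k = w := by
    obtain ⟨k, rfl, hk⟩ := mem_support_iff_exists_getVert.mp hwp
    exact ⟨k, Finset.mem_filter.mpr ⟨Finset.mem_range_succ_iff.mpr hk, hwq⟩, rfl⟩
  have hI : I.Nonempty := by
    obtain ⟨w, hwp, hwq⟩ := hmeet
    obtain ⟨k, hk, -⟩ := index_of_common w hwp hwq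
    exact ⟨k, hk⟩
  set i := I.min' hI
  set j := I.max' hI
  set Q := (p.drop i).take (j - i)
  have hQp : Q.IsSubwalk p := (isSubwalk_take _ _).trans (isSubwalk_drop _ _)
  have hQ : Q.IsPath := isPath_of_isSubwalk hQp hp
  have hstart : p.getVert i ∈ q.support := (Finset.mem_filter.mp (I.min'_mem hI)).2
  have hend : (p.drop i).getVert (j - i) ∈ q.support := by
    rw [drop_getVert, Nat.add_sub_cancel' (I.min'_le _ (I.max'_mem hI))]
    exact (Finset.mem_filter.mp (I.max'_mem hI)).2
  obtain ⟨hQq_supp, hQq_edges⟩ := hG.support_subset_and_edges_subset_of_isPath hq hQ hstart hend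
  refine ⟨_, _, Q, hQ, fun w => ⟨fun hw => ⟨hQp.support_subset hw, hQq_supp hw⟩, ?_⟩,
    hQp.edges_subset, hQq_edges⟩
  rintro ⟨hwp, hwq⟩
  obtain ⟨k, hk, rfl⟩ := index_of_common w hwp hwq
  exact p.getVert_mem_support_take_drop (I.min'_le k hk) (I.le_max' k hk)

end SimpleGraph

theorem stmt_11_general {V : Type*} (T : SimpleGraph V)
    (htree : T.IsTree)
    {a b a' b' : V} (L : T.Walk a b) (L' : T.Walk a' b')
    (hL : L.IsPath) (hL' : L'.IsPath)
    (hE : ∀ e ∈ T.edgeSet, e ∈ L.edges ∨ e ∈ L'.edges)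
    (hmeet : ∃ v : V, v ∈ L.support ∧ v ∈ L'.support) :
    ∃ (u v : V) (Q : T.Walk u v), Q.IsPath ∧
      (∀ w : V, w ∈ Q.support ↔ w ∈ L.support ∧ w ∈ L'.support) ∧
      (∀ e ∈ Q.edges, e ∈ L.edges ∧ e ∈ L'.edges) ∧
      (∀ x y : V, x ∈ L.support → x ∉ Q.support → y ∈ L'.support → y ∉ Q.support →
        x ≠ y ∧ ¬ T.Adj x y) := by
  obtain ⟨u, v, Q, hQ, hsupp, hQL, hQL'⟩ :=
    htree.isAcyclic.exists_isPath_support_eq_inter hL hL' hmeet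
  refine ⟨u, v, Q, hQ, hsupp, fun e he => ⟨hQL he, hQL' he⟩, ?_⟩
  intro x y hxL hxQ hyL' hyQ
  have hxL' : x ∉ L'.support := fun h => hxQ ((hsupp x).mpr ⟨hxL, h⟩)
  have hyL : y ∉ L.support := fun h => hyQ ((hsupp y).mpr ⟨h, hyL'⟩)
  refine ⟨fun hxy => hxL' (hxy ▸ hyL'), fun hadj => ?_⟩
  rcases hE s(x, y) hadj with h | h
  · exact hyL (L.snd_mem_support_of_mem_edges h)
  · exact hxL' (L'.fst_mem_support_of_mem_edges h)

theorem stmt_11 {V : Type*} [Fintype V] (T : SimpleGraph V)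
    (htree : T.IsTree)
    {a b a' b' : V} (L : T.Walk a b) (L' : T.Walk a' b')
    (hL : L.IsPath) (hL' : L'.IsPath)
    (hV : ∀ v : V, v ∈ L.support ∨ v ∈ L'.support)
    (hE : ∀ e ∈ T.edgeSet, e ∈ L.edges ∨ e ∈ L'.edges)
    (hmeet : ∃ v : V, v ∈ L.support ∧ v ∈ L'.support) :
    ∃ (u v : V) (Q : T.Walk u v), Q.IsPath ∧
      (∀ w : V, w ∈ Q.support ↔ w ∈ L.support ∧ w ∈ L'.support) ∧
      (∀ e ∈ Q.edges, e ∈ L.edges ∧ e ∈ L'.edges) ∧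
      (∀ x y : V, x ∈ L.support → x ∉ Q.support → y ∈ L'.support → y ∉ Q.support →
        x ≠ y ∧ ¬ T.Adj x y) :=
  stmt_11_general T htree L L' hL hL' hE hmeet
end

section
/- For every integer t ≥ 5 and m ≥ 0, the graph T_m (defined recursively by gluing subdivided cycles) contains no induced cycle of length 2t − 2. -/
open SimpleGraph

/-- One-directional adjacency for the territory graph `T_m` (for a fixed `t ≥ 5`).
Vertices are pairs `(j, a)` with `j ≤ m` a level and `a < t*(t-3)^j` a position on the
level-`j` cycle `B_j`; other pairs are isolated.  Level `j` is a cycle of length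
`t*(t-3)^j` (so `B_j` is the `(t-4)`-subdivision of a `t*(t-3)^(j-1)`-cycle whose branch
vertices sit at the positions divisible by `t-3`), and the spoke edges join the `i`-th
vertex of `B_j` to the `i`-th branch vertex `(t-3)*i` of `B_(j+1)`. -/
def tadjAux (t m : ℕ) (u v : ℕ × ℕ) : Prop :=
  5 ≤ t ∧ v.1 ≤ m ∧
    ((u.1 = v.1 ∧ u.2 < t * (t - 3) ^ u.1 ∧ v.2 < t * (t - 3) ^ u.1 ∧
        (u.2 + 1) % (t * (t - 3) ^ u.1) = v.2) ∨
     (v.1 = u.1 + 1 ∧ u.2 < t * (t - 3) ^ u.1 ∧ v.2 = (t - 3) * u.2))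

/-- The territory graph `T_m`, built by recursively gluing subdivided cycles. -/
def Tgraph (t m : ℕ) : SimpleGraph (ℕ × ℕ) where
  Adj u v := u ≠ v ∧ (tadjAux t m u v ∨ tadjAux t m v u)
  symm := by
    constructor
    intro u v h
    exact ⟨Ne.symm h.1, h.2.symm⟩
  loopless := by
    constructor
    intro u h
    exact h.1 rfl

/-!
Let `v` trace an induced `(2t-2)`-cycle of `T_m`, and let `B_j` be the highest level it meets.
It cannot stay inside `B_j`: a closed walk that never backtracks on a cycle winds around it, so
`|B_j| = t(t-3)^j` would divide `2t-2`. So it contains a maximal arc of `B_j`, entered and left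
along spokes from `B_(j-1)`. Spokes land on branch vertices, which are `t-3` apart, so the arc
length `ℓ` is a multiple of `t-3`, and `1 ≤ ℓ ≤ 2t-5` leaves `ℓ = t-3` or `ℓ = 2t-6`. In the
first case the lower ends `x, y` of the two spokes are adjacent on `B_(j-1)`. In the second the
one remaining vertex of the cycle is a common neighbour of `x` and `y`, hence the vertex between
them on `B_(j-1)`, and it is joined by a spoke to the middle of the arc. Either way the cycle has
a chord between two opposite vertices.
-/

theorem Int.exists_sign_modEq_of_steps {N : ℤ} {g : ℕ → ℤ} {ℓ : ℕ}
    (hstep : ∀ q < ℓ, ∃ σ : ℤ, (σ = 1 ∨ σ = -1) ∧ g (q + 1) ≡ g q + σ [ZMOD N])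
    (hback : ∀ q, q + 2 ≤ ℓ → ¬ g (q + 2) ≡ g q [ZMOD N]) :
    ∃ σ : ℤ, (σ = 1 ∨ σ = -1) ∧ ∀ q ≤ ℓ, g q ≡ g 0 + q * σ [ZMOD N] := by
  rcases Nat.eq_zero_or_pos ℓ with rfl | hℓ
  · refine ⟨1, .inl rfl, fun q hq => ?_⟩
    obtain rfl : q = 0 := by omega
    simp [Int.ModEq.refl]
  obtain ⟨σ, hσ, h0⟩ := hstep 0 hℓ
  -- A step `-σ` right after a step `σ` would give `g (q + 2) ≡ g q`.
  have hconst : ∀ q < ℓ, g (q + 1) ≡ g q + σ [ZMOD N] := by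
    intro q
    induction q with
    | zero => exact fun _ => h0
    | succ q ih =>
      intro hq
      obtain ⟨τ, hτ, h⟩ := hstep (q + 1) hq
      by_cases hτσ : τ = σ
      · exact hτσ ▸ h
      · have hback' := h.trans ((ih (by omega)).add_right τ)
        rw [show τ = -σ by omega, add_neg_cancel_right] at hback'
        exact absurd hback' (hback q (by omega))
  refine ⟨σ, hσ, fun q hq => ?_⟩
  induction q with
  | zero => simp [Int.ModEq.refl]
  | succ q ih =>
    have := (hconst q (by omega)).trans ((ih (by omega)).add_right σ)
    convert this using 1
    push_cast
    ring

theorem Int.exists_maximal_run {P : ℤ → Prop} {lo hi a : ℤ} (hlo : ¬ P lo) (hhi : ¬ P hi)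
    (ha : P a) (hloa : lo ≤ a) (hahi : a ≤ hi) :
    ∃ (p : ℤ) (ℓ : ℕ), lo < p ∧ p + ℓ < hi ∧ ¬ P (p - 1) ∧ ¬ P (p + ℓ + 1) ∧
      ∀ q : ℕ, q ≤ ℓ → P (p + q) := by
  obtain ⟨b₁, ⟨hb₁a, hb₁⟩, hb₁max⟩ := Int.exists_greatest_of_bdd (P := fun z => z ≤ a ∧ ¬ P z)
    ⟨a, fun _ h => h.1⟩ ⟨lo, hloa, hlo⟩
  obtain ⟨b₂, ⟨hab₂, hb₂⟩, hb₂min⟩ := Int.exists_least_of_bdd (P := fun z => a ≤ z ∧ ¬ P z)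
    ⟨a, fun _ h => h.1⟩ ⟨hi, hahi, hhi⟩
  have hb₁a' : b₁ < a := lt_of_le_of_ne hb₁a (by rintro rfl; exact hb₁ ha)
  have hab₂' : a < b₂ := lt_of_le_of_ne hab₂ (by rintro rfl; exact hb₂ ha)
  have hlo₁ := hb₁max lo ⟨hloa, hlo⟩
  have hhi₂ := hb₂min hi ⟨hahi, hhi⟩
  refine ⟨b₁ + 1, (b₂ - b₁ - 2).toNat, by omega, by omega, by simpa using hb₁,
    by rwa [show b₁ + 1 + ((b₂ - b₁ - 2).toNat : ℤ) + 1 = b₂ by omega], fun q hq => ?_⟩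
  by_contra hq'
  rcases le_total (b₁ + 1 + q) a with h | h
  · have := hb₁max _ ⟨h, hq'⟩
    omega
  · have := hb₂min _ ⟨h, hq'⟩
    omega

theorem Int.exists_eq_mul_modEq_of_mul_modEq {d M x y ℓ σ : ℤ} (hd : d ≠ 0)
    (hσ : σ = 1 ∨ σ = -1) (h : d * y ≡ d * x + ℓ * σ [ZMOD d * M]) :
    ∃ c, ℓ = d * c ∧ y ≡ x + c * σ [ZMOD M] := by
  have hdvd : d ∣ ℓ * σ := by
    have := (h.of_mul_right M).dvd
    rwa [show d * x + ℓ * σ - d * y = ℓ * σ + d * (x - y) by ring,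
      Int.dvd_add_left (dvd_mul_right _ _)] at this
  obtain ⟨c, rfl⟩ : d ∣ ℓ := by rcases hσ with rfl | rfl <;> simpa using hdvd
  refine ⟨c, rfl, Int.ModEq.mul_left_cancel' hd ?_⟩
  convert h using 2
  ring

theorem Int.natCast_modEq_of_mod_eq {a b L : ℕ} (h : a % L = b) : (b : ℤ) ≡ a [ZMOD L] :=
  Int.natCast_modEq_iff.2 (h ▸ Nat.mod_modEq a L)

-- Indexing the cycle by `ℤ` rather than `Fin n` keeps index arithmetic within reach of `omega`.
structure SimpleGraph.IsInducedCycle {V : Type*} (G : SimpleGraph V) (n : ℕ) (v : ℤ → V) :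
    Prop where
  eq_iff : ∀ i j, v i = v j ↔ i ≡ j [ZMOD n]
  adj_iff : ∀ i j, G.Adj (v i) (v j) ↔ j ≡ i + 1 [ZMOD n] ∨ i ≡ j + 1 [ZMOD n]

namespace SimpleGraph.IsInducedCycle

variable {V : Type*} {G : SimpleGraph V} {n : ℕ} {v : ℤ → V}

theorem exists_of_embedding (hn : 2 ≤ n) (f : cycleGraph n ↪g G) :
    ∃ v, G.IsInducedCycle n v := by
  obtain ⟨k, rfl⟩ : ∃ k, n = k + 2 := ⟨n - 2, by omega⟩
  -- `ZMod (k + 2)` is `Fin (k + 2)` by definition, with the same ring operations.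
  refine ⟨fun i => f (i : ZMod (k + 2)), fun i j => f.injective.eq_iff.trans ?_,
    fun i j => f.map_adj_iff.trans ?_⟩
  · change (i : ZMod (k + 2)) = j ↔ _
    exact_mod_cast ZMod.intCast_eq_intCast_iff i j (k + 2)
  · change (i : ZMod (k + 2)) - j = 1 ∨ (j : ZMod (k + 2)) - i = 1 ↔ _
    simp only [sub_eq_iff_eq_add', ← ZMod.intCast_eq_intCast_iff]
    push_cast
    tauto

theorem adj_add_one (hv : G.IsInducedCycle n v) (i : ℤ) : G.Adj (v i) (v (i + 1)) :=
  (hv.adj_iff _ _).2 (Or.inl .rfl)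

theorem apply_add_period (hv : G.IsInducedCycle n v) (i : ℤ) : v (i + n) = v i :=
  (hv.eq_iff _ _).2 Int.add_modEq_right

theorem ne_of_lt (hv : G.IsInducedCycle n v) {i j : ℤ} (hij : i < j) (hjn : j < i + n) :
    v i ≠ v j := fun h => by
  have := Int.le_of_dvd (by omega) ((hv.eq_iff i j).1 h).dvd
  omega

theorem not_adj (hv : G.IsInducedCycle n v) {i j : ℤ} (hij : i + 2 ≤ j) (hjn : j + 2 ≤ i + n) :
    ¬ G.Adj (v i) (v j) := by
  rw [hv.adj_iff]
  rintro (h | h)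
  · have := Int.le_of_dvd (by omega) h.symm.dvd
    omega
  · have := Int.le_of_dvd (by omega) h.dvd
    omega

end SimpleGraph.IsInducedCycle

namespace Tgraph

variable {t m : ℕ}

def levelLen (t j : ℕ) : ℕ := t * (t - 3) ^ j

def IsVertex (t m : ℕ) (u : ℕ × ℕ) : Prop := u.1 ≤ m ∧ u.2 < levelLen t u.1

def up (t : ℕ) (u : ℕ × ℕ) : ℕ × ℕ := (u.1 + 1, (t - 3) * u.2)

theorem levelLen_succ (t j : ℕ) : levelLen t (j + 1) = (t - 3) * levelLen t j := by
  simp only [levelLen, pow_succ]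
  ring

theorem le_levelLen (ht : 4 ≤ t) (j : ℕ) : t ≤ levelLen t j :=
  Nat.le_mul_of_pos_right t (pow_pos (by omega) j)

theorem levelLen_not_dvd (ht : 5 ≤ t) (j : ℕ) : ¬ levelLen t j ∣ 2 * t - 2 := by
  intro h
  cases j with
  | zero =>
    have : t ∣ 2 * t - (2 * t - 2) := Nat.dvd_sub (dvd_mul_left t 2) (by simpa [levelLen] using h)
    have := Nat.le_of_dvd (by omega) this
    omega
  | succ j =>
    have := Nat.le_of_dvd (by omega) h
    have : 2 * t ≤ levelLen t (j + 1) := by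
      rw [levelLen_succ]
      exact Nat.mul_le_mul (by omega) (le_levelLen (by omega) j)
    omega

theorem up_injective (ht : 4 ≤ t) : Function.Injective (up t) := by
  intro u w h
  simp only [up, Prod.mk.injEq, Nat.add_right_cancel_iff] at h
  exact Prod.ext h.1 (Nat.eq_of_mul_eq_mul_left (by omega) h.2)

theorem isVertex_of_adj {u w : ℕ × ℕ} (h : (Tgraph t m).Adj u w) : IsVertex t m u := by
  obtain ⟨-, ⟨-, hm, ⟨h1, h2, -⟩ | ⟨h1, h2, -⟩⟩ | ⟨ht, hm, ⟨h1, -, h3, -⟩ | ⟨h1, h2, h3⟩⟩⟩ := h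
  · exact ⟨h1 ▸ hm, h2⟩
  · exact ⟨by omega, h2⟩
  · exact ⟨hm, h1 ▸ h3⟩
  · refine ⟨hm, ?_⟩
    rw [h3, h1, levelLen_succ]
    exact (Nat.mul_lt_mul_left (by omega)).2 h2

theorem adj_cases {u w : ℕ × ℕ} (h : (Tgraph t m).Adj u w) :
    (u.1 = w.1 ∧ ∃ σ : ℤ, (σ = 1 ∨ σ = -1) ∧ (w.2 : ℤ) ≡ u.2 + σ [ZMOD levelLen t u.1]) ∨
      w = up t u ∨ u = up t w := by
  obtain ⟨-, ⟨-, -, ⟨h1, -, -, h4⟩ | ⟨h1, -, h3⟩⟩ | ⟨-, -, ⟨h1, -, -, h4⟩ | ⟨h1, -, h3⟩⟩⟩ := h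
  · exact .inl ⟨h1, 1, .inl rfl, by exact_mod_cast Int.natCast_modEq_of_mod_eq h4⟩
  · exact .inr (.inl (Prod.ext h1 h3))
  · refine .inl ⟨h1.symm, -1, .inr rfl, ?_⟩
    have : (u.2 : ℤ) ≡ w.2 + 1 [ZMOD levelLen t u.1] := by
      rw [levelLen, ← h1]
      exact_mod_cast Int.natCast_modEq_of_mod_eq h4
    simpa using this.symm.add_right (-1)
  · exact .inr (.inr (Prod.ext h1 h3))

theorem eq_up_of_adj_of_lt {u w : ℕ × ℕ} (h : (Tgraph t m).Adj u w) (hlt : u.1 < w.1) :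
    w = up t u := by
  rcases adj_cases h with ⟨heq, -⟩ | hw | hu
  · omega
  · exact hw
  · rw [hu, up] at hlt
    omega

theorem exists_sign_of_adj_of_fst_eq {u w : ℕ × ℕ} (h : (Tgraph t m).Adj u w) (hl : u.1 = w.1) :
    ∃ σ : ℤ, (σ = 1 ∨ σ = -1) ∧ (w.2 : ℤ) ≡ u.2 + σ [ZMOD levelLen t u.1] := by
  rcases adj_cases h with ⟨-, hσ⟩ | hw | hu
  · exact hσ
  · rw [hw, up] at hl
    omega
  · rw [hu, up] at hl
    omega

theorem adj_up (ht : 5 ≤ t) {u : ℕ × ℕ} (hm : u.1 + 1 ≤ m) (hu : u.2 < levelLen t u.1) :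
    (Tgraph t m).Adj u (up t u) :=
  ⟨by simp [up, Prod.ext_iff], .inl ⟨ht, hm, .inr ⟨rfl, hu, rfl⟩⟩⟩

theorem adj_of_modEq (ht : 5 ≤ t) {u w : ℕ × ℕ} (hu : IsVertex t m u) (hw : w.1 = u.1)
    (hw' : w.2 < levelLen t u.1) {σ : ℤ} (hσ : σ = 1 ∨ σ = -1)
    (h : (w.2 : ℤ) ≡ u.2 + σ [ZMOD levelLen t u.1]) : (Tgraph t m).Adj u w := by
  obtain ⟨j, a⟩ := u
  obtain ⟨j', b⟩ := w
  simp only at hw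
  subst j'
  obtain ⟨hj, ha⟩ := hu
  have hL := le_levelLen (by omega) j (t := t)
  refine ⟨fun h' => ?_, ?_⟩
  · obtain rfl : a = b := congrArg Prod.snd h'
    have hdvd := Int.left_modEq_add_iff.1 h
    have : (levelLen t j : ℤ) ∣ 1 := by
      rcases hσ with rfl | rfl
      exacts [hdvd, dvd_neg.1 hdvd]
    have := Int.le_of_dvd one_pos this
    omega
  · rcases hσ with rfl | rfl
    · refine .inl ⟨ht, hj, .inl ⟨rfl, ha, hw', ?_⟩⟩
      rw [← Nat.mod_eq_of_lt hw']
      exact Int.natCast_modEq_iff.1 (by exact_mod_cast h.symm)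
    · refine .inr ⟨ht, hj, .inl ⟨rfl, hw', ha, ?_⟩⟩
      have : (a : ℤ) ≡ b + 1 [ZMOD levelLen t j] := by simpa using (h.add_right 1).symm
      rw [← Nat.mod_eq_of_lt ha]
      exact Int.natCast_modEq_iff.1 (by exact_mod_cast this.symm)

theorem eq_of_modEq {u w : ℕ × ℕ} {j : ℕ} (hu : u.1 = j) (hw : w.1 = j)
    (hu' : u.2 < levelLen t j) (hw' : w.2 < levelLen t j)
    (h : (u.2 : ℤ) ≡ w.2 [ZMOD levelLen t j]) : u = w :=
  Prod.ext (hu.trans hw.symm) ((Int.natCast_modEq_iff.1 h).eq_of_lt_of_lt hu' hw')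

theorem fst_eq_and_modEq_of_adj_of_adj (ht : 5 ≤ t) {a b w : ℕ × ℕ} (hab : b.1 = a.1) {σ : ℤ}
    (hσ : σ = 1 ∨ σ = -1) (h2 : (b.2 : ℤ) ≡ a.2 + 2 * σ [ZMOD levelLen t a.1])
    (hwa : (Tgraph t m).Adj a w) (hwb : (Tgraph t m).Adj b w) :
    w.1 = a.1 ∧ (w.2 : ℤ) ≡ a.2 + σ [ZMOD levelLen t a.1] := by
  have hL := le_levelLen (t := t) (by omega) a.1
  have hab' : a ≠ b := by
    rintro rfl
    have := Int.eq_zero_of_abs_lt_dvd (Int.left_modEq_add_iff.1 h2) (by rw [abs_lt]; omega)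
    omega
  have hlev : w.1 = a.1 := by
    rcases lt_trichotomy a.1 w.1 with hlt | heq | hgt
    · refine absurd (up_injective (t := t) (by omega) ?_) hab'
      exact (eq_up_of_adj_of_lt hwa hlt).symm.trans (eq_up_of_adj_of_lt hwb (hab ▸ hlt))
    · exact heq.symm
    · refine absurd ?_ hab'
      exact (eq_up_of_adj_of_lt hwa.symm hgt).trans (eq_up_of_adj_of_lt hwb.symm (hab ▸ hgt)).symm
  obtain ⟨τ, hτ, hwτ⟩ := exists_sign_of_adj_of_fst_eq hwa hlev.symm
  obtain ⟨τ', hτ', hwτ'⟩ := exists_sign_of_adj_of_fst_eq hwb (hab.trans hlev.symm)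
  rw [hab] at hwτ'
  -- `2σ + τ' - τ` is divisible by `levelLen t a.1 ≥ 5`, hence zero
  have := Int.eq_zero_of_abs_lt_dvd (hwτ.symm.trans (hwτ'.trans (h2.add_right τ'))).dvd
    (by rw [abs_lt]; omega)
  obtain rfl : τ = σ := by omega
  exact ⟨hlev, hwτ⟩

section Cycle

variable {n : ℕ} {v : ℤ → ℕ × ℕ}

theorem isVertex_of_isInducedCycle (hv : (Tgraph t m).IsInducedCycle n v) (i : ℤ) :
    IsVertex t m (v i) :=
  isVertex_of_adj (hv.adj_add_one i)

theorem exists_sign_of_level_eq (hv : (Tgraph t m).IsInducedCycle n v) (hn : 3 ≤ n) {p : ℤ}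
    {j ℓ : ℕ} (hlev : ∀ q ≤ ℓ, (v (p + q)).1 = j) :
    ∃ σ : ℤ, (σ = 1 ∨ σ = -1) ∧
      ∀ q ≤ ℓ, ((v (p + q)).2 : ℤ) ≡ (v p).2 + q * σ [ZMOD levelLen t j] := by
  have hpos : ∀ q ≤ ℓ, (v (p + q)).2 < levelLen t j := fun q hq =>
    hlev q hq ▸ (isVertex_of_isInducedCycle hv _).2
  have hstep : ∀ q < ℓ, ∃ σ : ℤ, (σ = 1 ∨ σ = -1) ∧
      ((v (p + (q + 1 : ℕ))).2 : ℤ) ≡ (v (p + q)).2 + σ [ZMOD levelLen t j] := by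
    intro q hq
    have hadj : (Tgraph t m).Adj (v (p + q)) (v (p + (q + 1 : ℕ))) := by
      simpa [add_assoc] using hv.adj_add_one (p + q)
    have := exists_sign_of_adj_of_fst_eq hadj (by rw [hlev q hq.le, hlev (q + 1) hq])
    rwa [hlev q hq.le] at this
  have hback : ∀ q, q + 2 ≤ ℓ →
      ¬ ((v (p + (q + 2 : ℕ))).2 : ℤ) ≡ (v (p + q)).2 [ZMOD levelLen t j] := by
    intro q hq h
    refine hv.ne_of_lt (i := p + q) (j := p + (q + 2 : ℕ)) (by omega) (by omega) ?_
    exact (eq_of_modEq (hlev _ hq) (hlev _ (by omega)) (hpos _ hq) (hpos _ (by omega)) h).symm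
  simpa using Int.exists_sign_modEq_of_steps (g := fun q => ((v (p + q)).2 : ℤ)) hstep hback

theorem not_forall_level_eq (ht : 5 ≤ t) (hv : (Tgraph t m).IsInducedCycle (2 * t - 2) v)
    (j : ℕ) : ¬ ∀ i, (v i).1 = j := by
  intro hall
  obtain ⟨σ, hσ, h⟩ := exists_sign_of_level_eq hv (by omega) (p := 0) (ℓ := 2 * t - 2)
    fun q _ => hall _
  have hper := h (2 * t - 2) le_rfl
  rw [hv.apply_add_period 0] at hper
  have hdvd := Int.left_modEq_add_iff.1 hper
  refine levelLen_not_dvd ht j (Int.natCast_dvd_natCast.1 ?_)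
  rcases hσ with rfl | rfl <;> simpa using hdvd

theorem exists_top_arc (hv : (Tgraph t m).IsInducedCycle n v) (hn : 0 < n) {j : ℕ}
    (hmax : ∀ i, (v i).1 ≤ j) {i₀ i₁ : ℤ} (hi₀ : (v i₀).1 = j) (hi₁ : (v i₁).1 ≠ j) :
    ∃ (p : ℤ) (ℓ : ℕ), ℓ + 2 ≤ n ∧ (∀ q ≤ ℓ, (v (p + q)).1 = j) ∧
      v p = up t (v (p - 1)) ∧ v (p + ℓ) = up t (v (p + ℓ + 1)) := by
  -- the window `[hi - n, hi]` around `i₀` has copies of `i₁` at both ends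
  set hi := i₁ - n * ((i₁ - i₀) / n)
  have hhi : v hi = v i₁ := (hv.eq_iff _ _).2 (Int.sub_modulus_mul_modEq_iff.2 .rfl)
  have hlo : v (hi - n) = v i₁ := hhi ▸ (hv.eq_iff _ _).2 (Int.sub_modulus_modEq_iff.2 .rfl)
  have hwin : hi - i₀ = (i₁ - i₀) % n := by rw [Int.emod_def]; ring
  have h0 := Int.emod_nonneg (i₁ - i₀) (by omega : (n : ℤ) ≠ 0)
  have h1 := Int.emod_lt_of_pos (i₁ - i₀) (by omega : (0 : ℤ) < n)
  obtain ⟨p, ℓ, hlop, hphi, hp, hpℓ, harc⟩ := Int.exists_maximal_run (P := fun i => (v i).1 = j)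
    (by rwa [hlo]) (by rwa [hhi]) hi₀ (by omega) (by omega)
  refine ⟨p, ℓ, by omega, harc, ?_, ?_⟩
  · refine eq_up_of_adj_of_lt (by simpa using hv.adj_add_one (p - 1)) ?_
    have := hmax (p - 1)
    have := harc 0 (Nat.zero_le _)
    rw [Nat.cast_zero, add_zero] at this
    omega
  · refine eq_up_of_adj_of_lt (hv.adj_add_one (p + ℓ)).symm ?_
    have := harc ℓ le_rfl
    have := hmax (p + ℓ + 1)
    omega

theorem false_of_two_segment_arc (ht : 5 ≤ t) (hv : (Tgraph t m).IsInducedCycle (2 * t - 2) v)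
    {p : ℤ} {ℓ : ℕ} (hℓ : ℓ = 2 * (t - 3)) {σ : ℤ} (hσ : σ = 1 ∨ σ = -1)
    (hlev : (v (p + ℓ + 1)).1 = (v (p - 1)).1)
    (hend : ((v (p + ℓ + 1)).2 : ℤ) ≡ (v (p - 1)).2 + 2 * σ [ZMOD levelLen t (v (p - 1)).1])
    (hmid₁ : (v (p + (t - 3 : ℕ))).1 = (v (p - 1)).1 + 1)
    (hmid₂ : ((v (p + (t - 3 : ℕ))).2 : ℤ) ≡ (t - 3 : ℕ) * ((v (p - 1)).2 + σ)
      [ZMOD levelLen t ((v (p - 1)).1 + 1)]) : False := by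
  set a := v (p - 1) with ha
  set w := v (p + ℓ + 2)
  have hbw : (Tgraph t m).Adj (v (p + ℓ + 1)) w := by
    convert hv.adj_add_one (p + ℓ + 1) using 2
    ring
  have haw : (Tgraph t m).Adj a w := by
    rw [ha, ← hv.apply_add_period (p - 1), show p - 1 + ↑(2 * t - 2) = p + ℓ + 2 + 1 by omega]
    exact (hv.adj_add_one _).symm
  obtain ⟨hwl, hwσ⟩ := fst_eq_and_modEq_of_adj_of_adj ht hlev hσ hend haw hbw
  obtain ⟨-, hwL⟩ := isVertex_of_isInducedCycle hv (p + ℓ + 2)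
  have hmidw : v (p + (t - 3 : ℕ)) = up t w := by
    refine eq_of_modEq hmid₁ (by simp [up, hwl]) (hmid₁ ▸ (isVertex_of_isInducedCycle hv _).2)
      ?_ (hmid₂.trans ?_)
    · rw [levelLen_succ, ← hwl]
      exact Nat.mul_lt_mul_of_pos_left hwL (by omega)
    · rw [levelLen_succ]
      push_cast
      exact hwσ.symm.mul_left'
  refine hv.not_adj (i := p + (t - 3 : ℕ)) (j := p + ℓ + 2) (by omega) (by omega) ?_
  rw [hmidw]
  refine (adj_up ht ?_ hwL).symm
  have := (isVertex_of_isInducedCycle hv (p + (t - 3 : ℕ))).1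
  rwa [hmidw] at this

theorem length_bounds_of_spokes (ht : 4 ≤ t) (hv : (Tgraph t m).IsInducedCycle n v) (hn : 3 ≤ n)
    {p : ℤ} {ℓ : ℕ} (hℓn : ℓ + 2 ≤ n) (hp : v p = up t (v (p - 1)))
    (hpℓ : v (p + ℓ) = up t (v (p + ℓ + 1))) : 1 ≤ ℓ ∧ ℓ + 3 ≤ n := by
  have hℓ : 1 ≤ ℓ := by
    by_contra! hℓ
    obtain rfl : ℓ = 0 := by omega
    refine hv.ne_of_lt (i := p - 1) (j := p + 1) (by omega) (by omega) ?_
    exact up_injective ht (hp.symm.trans (by simpa using hpℓ))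
  refine ⟨hℓ, ?_⟩
  by_contra! hℓn'
  refine hv.ne_of_lt (i := p) (j := p + ℓ) (by omega) (by omega) ?_
  rw [hp, hpℓ, ← hv.apply_add_period (p - 1)]
  congr 2
  omega

theorem false_of_one_segment_arc (ht : 5 ≤ t) (hv : (Tgraph t m).IsInducedCycle (2 * t - 2) v)
    {p : ℤ} {ℓ : ℕ} (hℓ : ℓ = t - 3) {σ : ℤ} (hσ : σ = 1 ∨ σ = -1)
    (hlev : (v (p + ℓ + 1)).1 = (v (p - 1)).1)
    (hend : ((v (p + ℓ + 1)).2 : ℤ) ≡ (v (p - 1)).2 + σ [ZMOD levelLen t (v (p - 1)).1]) :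
    False := by
  refine hv.not_adj (i := p - 1) (j := p + ℓ + 1) (by omega) (by omega) ?_
  refine adj_of_modEq ht (isVertex_of_isInducedCycle hv _) hlev ?_ hσ hend
  simpa [hlev] using (isVertex_of_isInducedCycle hv (p + ℓ + 1)).2

theorem false_of_top_arc (ht : 5 ≤ t) (hv : (Tgraph t m).IsInducedCycle (2 * t - 2) v)
    {p : ℤ} {ℓ j : ℕ} (hℓn : ℓ + 2 ≤ 2 * t - 2) (harc : ∀ q ≤ ℓ, (v (p + q)).1 = j)
    (hp : v p = up t (v (p - 1))) (hpℓ : v (p + ℓ) = up t (v (p + ℓ + 1))) : False := by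
  have hja : (v (p - 1)).1 + 1 = j := by simpa [hp, up] using harc 0 (Nat.zero_le _)
  have hjb : (v (p + ℓ + 1)).1 + 1 = j := by simpa [hpℓ, up] using harc ℓ le_rfl
  have hlev : (v (p + ℓ + 1)).1 = (v (p - 1)).1 := by omega
  obtain ⟨hℓ₁, hℓ₂⟩ := length_bounds_of_spokes (by omega) hv (by omega) hℓn hp hpℓ
  obtain ⟨σ, hσ, hwalk⟩ := exists_sign_of_level_eq hv (by omega) harc
  have hL : levelLen t j = (t - 3) * levelLen t (v (p - 1)).1 := by rw [← hja, levelLen_succ]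
  have hend := hwalk ℓ le_rfl
  rw [hpℓ, hp, hL] at hend
  simp only [up] at hend
  push_cast at hend
  obtain ⟨c, hc, hmod⟩ := Int.exists_eq_mul_modEq_of_mul_modEq (by omega) hσ hend
  -- `1 ≤ ℓ ≤ 2t - 5` and `t - 3 ∣ ℓ` leave only arcs of one or two segments
  have hd : ((t - 3 : ℕ) : ℤ) = t - 3 := by omega
  have hℓ₁' : (1 : ℤ) ≤ ℓ := by omega
  have hℓ₂' : (ℓ : ℤ) ≤ 2 * t - 5 := by omega
  have hc₁ : 0 < c := by nlinarith
  have hc₂ : c < 3 := by nlinarith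
  interval_cases c
  · exact false_of_one_segment_arc ht hv (by omega) hσ hlev (by simpa using hmod)
  · refine false_of_two_segment_arc ht hv (by omega) hσ hlev hmod ?_ ?_
    · rw [harc _ (by omega), hja]
    · have hmid := hwalk (t - 3) (by omega)
      rw [hp, ← hja] at hmid
      convert hmid using 2
      simp only [up]
      push_cast
      ring

end Cycle

theorem not_isInducedCycle (ht : 5 ≤ t) (v : ℤ → ℕ × ℕ) :
    ¬ (Tgraph t m).IsInducedCycle (2 * t - 2) v := by
  intro hv
  have hbdd : BddAbove (Set.range fun i => (v i).1) :=
    ⟨m, by rintro _ ⟨i, rfl⟩; exact (isVertex_of_isInducedCycle hv i).1⟩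
  obtain ⟨i₀, hi₀⟩ := Nat.sSup_mem (Set.range_nonempty _) hbdd
  have hmax : ∀ i, (v i).1 ≤ (v i₀).1 := fun i => by
    simpa only [hi₀] using le_csSup hbdd ⟨i, rfl⟩
  obtain ⟨i₁, hi₁⟩ := not_forall.1 (not_forall_level_eq ht hv (v i₀).1)
  obtain ⟨p, ℓ, hℓn, harc, hp, hpℓ⟩ := exists_top_arc hv (by omega) hmax rfl hi₁
  exact false_of_top_arc ht hv hℓn harc hp hpℓ

end Tgraph

theorem stmt_15 (t m : ℕ) (ht : 5 ≤ t) :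
    ¬ Nonempty (cycleGraph (2 * t - 2) ↪g Tgraph t m) := by
  rintro ⟨f⟩
  obtain ⟨v, hv⟩ := IsInducedCycle.exists_of_embedding (by omega) f
  exact Tgraph.not_isInducedCycle ht v hv
end

section
/- Let t ≥ 5, d ≥ 1 be integers, m ≥ 0, and let x, y be vertices of B_m with dist_{T_m}(x, y) ≤ d. Then dist_{B_m}(x, y) ≤ (t−2)^d. -/
open SimpleGraph

/-- Distance along the boundary cycle `B_m` (of length `n`) between positions `a, b < n`. -/
def cycleDist (n a b : ℕ) : ℕ :=
  min (max a b - min a b) (n - (max a b - min a b))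

/-!
Send every vertex `(j, a)` of `T_m` to its shadow `a (t-3)^(m-j)` on the outer cycle `B_m`.
Spokes fix the shadow, and an edge of `B_j` moves it by at most `(t-3)^(m-j)` along `B_m`.
Along a walk of length `L` that starts at depth `k = m - j` and ends on `B_m`, induction from the
end gives `k ≤ L` and a distance of at most `(t-2)^(L-k) (t-3)^k` between the shadows of its ends;
for `k = 0` this is the bound `(t-2)^L`.
-/

theorem SimpleGraph.Walk.depth_le_length_and_potential_le {V : Type*} {G : SimpleGraph V}
    {c : ℕ} (hc : 1 ≤ c) (depth D : V → ℕ)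
    (hstep : ∀ u w, G.Adj u w →
      (depth u = depth w ∧ D u ≤ D w + c ^ depth u) ∨
        ((depth u = depth w + 1 ∨ depth w = depth u + 1) ∧ D u ≤ D w))
    {u v : V} (p : G.Walk u v) (hv : depth v = 0) (hDv : D v = 0) :
    depth u ≤ p.length ∧ D u ≤ (c + 1) ^ (p.length - depth u) * c ^ depth u := by
  induction p with
  | nil => simp [hv, hDv]
  | @cons u w v huw q ih =>
    obtain ⟨hk, hD⟩ := ih hv hDv
    rw [Walk.length_cons]
    rcases hstep u w huw with ⟨hlevel, hDu⟩ | ⟨hdeeper | hshallower, hDu⟩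
    · refine ⟨by omega, ?_⟩
      rw [← hlevel] at hD
      rw [show q.length + 1 - depth u = q.length - depth u + 1 by omega, pow_succ]
      set X := (c + 1) ^ (q.length - depth u)
      have hX : 1 ≤ X := Nat.one_le_pow _ _ (by omega)
      calc D u ≤ X * c ^ depth u + c ^ depth u := by omega
        _ = (X + 1) * c ^ depth u := by ring
        _ ≤ X * (c + 1) * c ^ depth u := Nat.mul_le_mul_right _ (by nlinarith)
    · refine ⟨by omega, hDu.trans (hD.trans ?_)⟩
      rw [hdeeper, show q.length + 1 - (depth w + 1) = q.length - depth w by omega, pow_succ]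
      exact Nat.mul_le_mul_left _ (Nat.le_mul_of_pos_right _ hc)
    · refine ⟨by omega, hDu.trans (hD.trans ?_)⟩
      rw [hshallower, show q.length + 1 - depth u = q.length - (depth u + 1) + 2 by omega,
        pow_add (c + 1), pow_succ c (depth u)]
      set X := (c + 1) ^ (q.length - (depth u + 1))
      calc X * (c ^ depth u * c) = X * c ^ depth u * c := by ring
        _ ≤ X * c ^ depth u * (c + 1) ^ 2 := by gcongr; nlinarith
        _ = X * (c + 1) ^ 2 * c ^ depth u := by ring

lemma cycleDist_comm (n a b : ℕ) : cycleDist n a b = cycleDist n b a := by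
  unfold cycleDist; omega

lemma cycleDist_self (n a : ℕ) : cycleDist n a a = 0 := by
  unfold cycleDist; omega

lemma cycleDist_triangle {n a b c : ℕ} (ha : a < n) (hb : b < n) (hc : c < n) :
    cycleDist n a c ≤ cycleDist n a b + cycleDist n b c := by
  unfold cycleDist; omega

lemma cycleDist_mul_succ_mod_le {n a : ℕ} (ha : a < n) (s : ℕ) :
    cycleDist (n * s) (a * s) ((a + 1) % n * s) ≤ s := by
  have hsucc : (a + 1) * s = a * s + s := by ring
  rcases Nat.lt_or_ge (a + 1) n with hlt | hge
  · rw [Nat.mod_eq_of_lt hlt]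
    unfold cycleDist; omega
  · obtain rfl : n = a + 1 := by omega
    rw [Nat.mod_self, zero_mul]
    unfold cycleDist; omega

namespace Tgraph

variable {t m : ℕ}

/-- The position of `B_m` lying above the vertex `(j, a)`: the branch vertices of `B_(j+1)` sit
`t-3` steps apart, so position `a` of `B_j` ends up at `a * (t-3)^(m-j)` on `B_m`. -/
def shadow (t m : ℕ) (u : ℕ × ℕ) : ℕ := u.2 * (t - 3) ^ (m - u.1)

lemma length_eq_mul (t : ℕ) {j m : ℕ} (h : j ≤ m) :
    t * (t - 3) ^ m = t * (t - 3) ^ j * (t - 3) ^ (m - j) := by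
  rw [mul_assoc, ← pow_add, Nat.add_sub_cancel' h]

lemma shadow_lt (ht : 5 ≤ t) {u : ℕ × ℕ} (h1 : u.1 ≤ m) (h2 : u.2 < t * (t - 3) ^ u.1) :
    shadow t m u < t * (t - 3) ^ m := by
  rw [shadow, length_eq_mul t h1]
  exact Nat.mul_lt_mul_of_pos_right h2 (Nat.pow_pos (by omega))

lemma tadjAux_level_le {u v : ℕ × ℕ} (h : tadjAux t m u v) : u.1 ≤ m ∧ v.1 ≤ m := by
  obtain ⟨-, hvm, ⟨hl, -⟩ | ⟨hl, -⟩⟩ := h <;> omega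

lemma tadjAux_step {u v : ℕ × ℕ} (h : tadjAux t m u v) :
    (u.1 = v.1 ∧
        cycleDist (t * (t - 3) ^ m) (shadow t m u) (shadow t m v) ≤ (t - 3) ^ (m - u.1)) ∨
      (v.1 = u.1 + 1 ∧ shadow t m u = shadow t m v) := by
  have hum := (tadjAux_level_le h).1
  obtain ⟨-, hvm, ⟨hlevel, hu, -, hv⟩ | ⟨hlevel, -, hv⟩⟩ := h
  · left
    refine ⟨hlevel, ?_⟩
    rw [shadow, shadow, ← hlevel, ← hv, length_eq_mul t hum]
    exact cycleDist_mul_succ_mod_le hu _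
  · right
    refine ⟨hlevel, ?_⟩
    rw [shadow, shadow, hv, hlevel, show m - u.1 = m - (u.1 + 1) + 1 by omega, pow_succ]
    ring

lemma tadjAux_shadow_lt (ht : 5 ≤ t) {u v : ℕ × ℕ} (h : tadjAux t m u v) :
    shadow t m u < t * (t - 3) ^ m ∧ shadow t m v < t * (t - 3) ^ m := by
  obtain ⟨hum, hvm⟩ := tadjAux_level_le h
  have hu : shadow t m u < t * (t - 3) ^ m := by
    obtain ⟨-, -, ⟨-, hu, -⟩ | ⟨-, hu, -⟩⟩ := h <;> exact shadow_lt ht hum hu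
  refine ⟨hu, ?_⟩
  rcases tadjAux_step h with ⟨hlevel, -⟩ | ⟨-, heq⟩
  · obtain ⟨-, -, ⟨-, -, hv, -⟩ | ⟨hlevel', -⟩⟩ := h
    · exact shadow_lt ht hvm (hlevel ▸ hv)
    · omega
  · exact heq ▸ hu

lemma adj_step (ht : 5 ≤ t) {b : ℕ} (hb : b < t * (t - 3) ^ m) {u w : ℕ × ℕ}
    (h : (Tgraph t m).Adj u w) :
    let D := fun x => cycleDist (t * (t - 3) ^ m) (shadow t m x) b
    (m - u.1 = m - w.1 ∧ D u ≤ D w + (t - 3) ^ (m - u.1)) ∨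
      ((m - u.1 = m - w.1 + 1 ∨ m - w.1 = m - u.1 + 1) ∧ D u ≤ D w) := by
  dsimp only
  obtain ⟨-, h | h⟩ := h
  · have ⟨huw, hwu⟩ := tadjAux_shadow_lt ht h
    have htri := cycleDist_triangle huw hwu hb
    have hm := tadjAux_level_le h
    rcases tadjAux_step h with ⟨hl, hd⟩ | ⟨hl, heq⟩
    · exact Or.inl ⟨by rw [hl], by omega⟩
    · exact Or.inr ⟨by omega, by rw [heq]⟩
  · have ⟨hwu, huw⟩ := tadjAux_shadow_lt ht h
    have htri := cycleDist_triangle huw hwu hb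
    have hm := tadjAux_level_le h
    rcases tadjAux_step h with ⟨hl, hd⟩ | ⟨hl, heq⟩
    · rw [cycleDist_comm, hl] at hd
      exact Or.inl ⟨by rw [hl], by omega⟩
    · exact Or.inr ⟨by omega, by rw [heq]⟩

lemma adj_outer_succ (ht : 5 ≤ t) {a : ℕ} (ha : a + 1 < t * (t - 3) ^ m) :
    (Tgraph t m).Adj (m, a) (m, a + 1) :=
  have ha' : a < t * (t - 3) ^ m := by omega
  ⟨by simp, Or.inl ⟨ht, le_rfl, Or.inl ⟨rfl, ha', ha, Nat.mod_eq_of_lt ha⟩⟩⟩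

lemma reachable_outer_zero (ht : 5 ≤ t) {a : ℕ} (ha : a < t * (t - 3) ^ m) :
    (Tgraph t m).Reachable (m, 0) (m, a) := by
  induction a with
  | zero => rfl
  | succ a ih => exact (ih (by omega)).trans (adj_outer_succ ht ha).reachable

lemma reachable_outer (ht : 5 ≤ t) {a b : ℕ} (ha : a < t * (t - 3) ^ m)
    (hb : b < t * (t - 3) ^ m) : (Tgraph t m).Reachable (m, a) (m, b) :=
  (reachable_outer_zero ht ha).symm.trans (reachable_outer_zero ht hb)

end Tgraph

theorem stmt_16_general (t m d : ℕ) (ht : 5 ≤ t)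
    (a b : ℕ) (ha : a < t * (t - 3) ^ m) (hb : b < t * (t - 3) ^ m)
    (hdist : (Tgraph t m).dist (m, a) (m, b) ≤ d) :
    cycleDist (t * (t - 3) ^ m) a b ≤ (t - 2) ^ d := by
  obtain ⟨p, hp⟩ := (Tgraph.reachable_outer ht ha hb).exists_walk_length_eq_dist
  have hbound := (p.depth_le_length_and_potential_le (c := t - 3) (by omega)
    (fun x => m - x.1) (fun x => cycleDist (t * (t - 3) ^ m) (Tgraph.shadow t m x) b)
    (fun _ _ => Tgraph.adj_step ht hb) (by simp) (by simp [Tgraph.shadow, cycleDist_self])).2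
  simp only [Tgraph.shadow, Nat.sub_self, pow_zero, mul_one, Nat.sub_zero,
    show t - 3 + 1 = t - 2 by omega] at hbound
  exact hbound.trans (Nat.pow_le_pow_right (by omega) (hp ▸ hdist))

theorem stmt_16 (t m d : ℕ) (ht : 5 ≤ t) (hd : 1 ≤ d)
    (a b : ℕ) (ha : a < t * (t - 3) ^ m) (hb : b < t * (t - 3) ^ m)
    (hdist : (Tgraph t m).dist (m, a) (m, b) ≤ d) :
    cycleDist (t * (t - 3) ^ m) a b ≤ (t - 2) ^ d :=
  stmt_16_general t m d ht a b ha hb hdist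
end
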